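/- Let G be a 2-connected finite simple graph on vertex set V with |V| ≥ 3, and let S ⊆ V be nonempty. If G contains no even S-cycle, then every cycle of G that contains a vertex of S contains every vertex of S. -/

import Mathlib

/-!
Suppose a cycle `c` through a vertex of `S` misses some `w ∈ S`; then `c` is odd. By
2-connectivity there is a fan from `w` to `c`: two paths from `w` to distinct vertices `p`, `q`
of `c`, disjoint except at `w` and meeting `c` only at their ends. The two arcs of `c` between
`p` and `q` have lengths of different parity, so closing the fan with one of them gives an even
cycle through `w`.

The fan comes from a cycle through `w` and a vertex of `c` (any two vertices of a 2-connected
graph lie on a common cycle, by induction along a walk joining them). If both arcs of that cycle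
first reach `c` at the same vertex `t`, a path to them from `c` avoiding `t` reroutes one arc.
-/

open SimpleGraph

/-- A finite simple graph is 2-connected if it has at least 3 vertices, is connected,
and deleting any single vertex leaves a connected graph. -/
def TwoConnected {V : Type*} [Fintype V] (G : SimpleGraph V) : Prop :=
  3 ≤ Fintype.card V ∧ G.Connected ∧
    ∀ v : V, (G.induce {w : V | w ≠ v}).Connected

namespace SimpleGraph

variable {V : Type*} {G : SimpleGraph V}

namespace Walk

theorem exists_eq_append_first_mem {u v : V} (W : G.Walk u v) {T : Set V}
    (hT : ∃ x ∈ W.support, x ∈ T) :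
    ∃ (g : V) (W₁ : G.Walk u g) (W₂ : G.Walk g v),
      W = W₁.append W₂ ∧ g ∈ T ∧ ∀ x ∈ W₁.support, x ∈ T → x = g := by
  induction W with
  | nil =>
    obtain ⟨x, hx, hxT⟩ := hT
    rw [support_nil, List.mem_singleton] at hx
    subst hx
    exact ⟨x, nil, nil, rfl, hxT, by simp⟩
  | @cons a b v hab W ih =>
    by_cases ha : a ∈ T
    · exact ⟨a, nil, cons hab W, rfl, ha, by simp⟩
    obtain ⟨g, W₁, W₂, rfl, hg, hW₁⟩ := ih <| by
      obtain ⟨x, hx, hxT⟩ := hT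
      exact ⟨x, (mem_support_iff _).mp hx |>.resolve_left (by rintro rfl; exact ha hxT), hxT⟩
    refine ⟨g, cons hab W₁, W₂, rfl, hg, fun x hx hxT => ?_⟩
    rcases (mem_support_iff _).mp hx with rfl | hx
    · exact absurd hxT ha
    · exact hW₁ x (by simpa using hx) hxT

theorem IsPath.start_notMem_support_tail {u v : V} {P : G.Walk u v} (hP : P.IsPath) :
    u ∉ P.support.tail := by
  have := hP.support_nodup
  rw [← cons_tail_support] at this
  exact (List.nodup_cons.mp this).1

theorem IsPath.append {u m v : V} {P : G.Walk u m} {Q : G.Walk m v}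
    (hP : P.IsPath) (hQ : Q.IsPath) (hPQ : ∀ x ∈ P.support, x ∈ Q.support → x = m) :
    (P.append Q).IsPath := by
  rw [isPath_def, support_append]
  refine hP.support_nodup.append hQ.support_nodup.tail fun x hxP hxQ => ?_
  obtain rfl := hPQ x hxP (List.mem_of_mem_tail hxQ)
  exact hQ.start_notMem_support_tail hxQ

theorem IsPath.isCycle_append_reverse {u v : V} {P Q : G.Walk u v}
    (hP : P.IsPath) (hQ : Q.IsPath) (hPQ : ∀ x ∈ P.support, x ∈ Q.support → x = u ∨ x = v)
    (hlen : 1 < P.length) : (P.append Q.reverse).IsCycle := by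
  refine hP.isCycle_append hQ.reverse (fun x hxP hxQ => ?_) (Or.inl hlen)
  have hxQ' : x ∈ Q.support := by
    simpa [support_reverse] using List.mem_of_mem_tail hxQ
  rcases hPQ x (List.mem_of_mem_tail hxP) hxQ' with rfl | rfl
  · exact hP.start_notMem_support_tail hxP
  · exact hQ.reverse.start_notMem_support_tail hxQ

theorem IsCycle.eq_or_eq_of_mem_support {p q x : V} {A : G.Walk p q} {B : G.Walk q p}
    (h : (A.append B).IsCycle) (hA : x ∈ A.support) (hB : x ∈ B.support) : x = p ∨ x = q := by
  have hnd := h.support_nodup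
  rw [tail_support_append] at hnd
  by_contra! hx
  exact List.disjoint_of_nodup_append hnd
    ((mem_support_iff _).mp hA |>.resolve_left hx.1)
    ((mem_support_iff _).mp hB |>.resolve_left hx.2)

theorem IsCycle.exists_isCycle_append {a p q : V} {c : G.Walk a a} (hc : c.IsCycle)
    (hp : p ∈ c.support) (hq : q ∈ c.support) :
    ∃ (A : G.Walk p q) (B : G.Walk q p), (A.append B).IsCycle ∧
      A.length + B.length = c.length ∧ ∀ x, x ∈ c.support ↔ x ∈ A.support ∨ x ∈ B.support := by
  classical
  have hq' : q ∈ (c.rotate p hp).support := (mem_support_rotate_iff ..).mpr hq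
  refine ⟨(c.rotate p hp).takeUntil q hq', (c.rotate p hp).dropUntil q hq', ?_, ?_, fun x => ?_⟩
  · rw [take_spec]
    exact hc.rotate hp
  · rw [← length_append, take_spec, length_rotate]
  · rw [← mem_support_append_iff, take_spec, mem_support_rotate_iff]

theorem IsCycle.exists_mem_support_ne {a : V} {c : G.Walk a a} (hc : c.IsCycle) (s : V) :
    ∃ t ∈ c.support, t ≠ s := by
  by_cases hs : c.snd = s
  · exact ⟨c.penultimate, c.getVert_mem_support _, hs ▸ hc.snd_ne_penultimate.symm⟩
  · exact ⟨c.snd, c.getVert_mem_support _, hs⟩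

end Walk

open Walk

theorem isCycle_append_append_reverse {w p q : V} {P : G.Walk w p} {γ : G.Walk p q}
    {Q : G.Walk w q} (hP : P.IsPath) (hγ : γ.IsPath) (hQ : Q.IsPath) (hpq : p ≠ q)
    (hPγ : ∀ x ∈ P.support, x ∈ γ.support → x = p)
    (hQγ : ∀ x ∈ Q.support, x ∈ γ.support → x = q)
    (hPQ : ∀ x ∈ P.support, x ∈ Q.support → x = w) :
    ((P.append γ).append Q.reverse).IsCycle := by
  have hwp : w ≠ p := by
    rintro rfl
    exact hpq (hQγ w Q.start_mem_support γ.start_mem_support)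
  refine (hP.append hγ hPγ).isCycle_append_reverse hQ (fun x hx hxQ => ?_) ?_
  · rcases (mem_support_append_iff _ _).mp hx with hxP | hxγ
    · exact Or.inl (hPQ x hxP hxQ)
    · exact Or.inr (hQγ x hxQ hxγ)
  · have : P.length ≠ 0 := fun h => hwp (eq_of_length_eq_zero h)
    have : γ.length ≠ 0 := fun h => hpq (eq_of_length_eq_zero h)
    rw [length_append]
    omega

structure IsFan (T : Set V) {w p q : V} (P : G.Walk w p) (Q : G.Walk w q) : Prop where
  ne : p ≠ q
  left_mem : p ∈ T
  right_mem : q ∈ T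
  isPath_left : P.IsPath
  isPath_right : Q.IsPath
  left_inter : ∀ x ∈ P.support, x ∈ T → x = p
  right_inter : ∀ x ∈ Q.support, x ∈ T → x = q
  inter : ∀ x ∈ P.support, x ∈ Q.support → x = w

theorem IsFan.exists_even_isCycle {a w p q : V} {c : G.Walk a a} {P : G.Walk w p}
    {Q : G.Walk w q} (hc : c.IsCycle) (hodd : Odd c.length)
    (hfan : IsFan {x | x ∈ c.support} P Q) : ∃ Z : G.Walk w w, Z.IsCycle ∧ Even Z.length := by
  obtain ⟨A, B, hAB, hlen, hsupp⟩ := hc.exists_isCycle_append hfan.left_mem hfan.right_mem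
  have close : ∀ γ : G.Walk p q, γ.IsPath → (∀ x ∈ γ.support, x ∈ c.support) →
      ((P.append γ).append Q.reverse).IsCycle := fun γ hγ hγc =>
    isCycle_append_append_reverse hfan.isPath_left hγ hfan.isPath_right hfan.ne
      (fun x hx hxγ => hfan.left_inter x hx (hγc x hxγ))
      (fun x hx hxγ => hfan.right_inter x hx (hγc x hxγ)) hfan.inter
  have hA : A.IsPath := hAB.isPath_of_append_left (not_nil_of_ne hfan.ne.symm)
  have hB : B.IsPath := hAB.isPath_of_append_right (not_nil_of_ne hfan.ne)
  have hAc : ∀ x ∈ A.support, x ∈ c.support := fun x hx => (hsupp x).mpr (Or.inl hx)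
  have hBc : ∀ x ∈ B.reverse.support, x ∈ c.support := fun x hx =>
    (hsupp x).mpr (Or.inr (by simpa using hx))
  rcases Nat.even_or_odd (P.length + A.length + Q.length) with he | ho
  · exact ⟨_, close A hA hAc, by simpa [length_append] using he⟩
  · refine ⟨_, close B.reverse hB.reverse hBc, ?_⟩
    simp only [length_append, length_reverse]
    rw [Nat.odd_iff] at hodd ho
    rw [Nat.even_iff]
    omega

theorem exists_isPath_notMem_support {x u v : V} (h : (G.induce {w | w ≠ x}).Preconnected)
    (hu : u ≠ x) (hv : v ≠ x) : ∃ P : G.Walk u v, P.IsPath ∧ x ∉ P.support := by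
  classical
  obtain ⟨W⟩ := h ⟨u, hu⟩ ⟨v, hv⟩
  refine ⟨(W.map (Embedding.induce _).toHom).bypass, bypass_isPath _, fun hx => ?_⟩
  have hx' : x ∈ W.support.map (Embedding.induce (G := G) _).toHom := by
    rw [← Walk.support_map]
    exact support_bypass_subset_support _ hx
  obtain ⟨y, -, hyx⟩ := List.mem_map.mp hx'
  exact y.2 hyx

theorem exists_isCycle_of_adj_of_isCycle {b x y v : V}
    (hy : (G.induce {w | w ≠ y}).Preconnected) (hxy : G.Adj x y) {D : G.Walk b b}
    (hD : D.IsCycle) (hyD : y ∈ D.support) (hvD : v ∈ D.support) (hvy : v ≠ y) :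
    ∃ (b' : V) (Z : G.Walk b' b'), Z.IsCycle ∧ x ∈ Z.support ∧ v ∈ Z.support := by
  by_cases hxD : x ∈ D.support
  · exact ⟨b, D, hD, hxD, hvD⟩
  obtain ⟨P, hP, hyP⟩ := exists_isPath_notMem_support hy hxy.ne hvy
  obtain ⟨r, Q, R, rfl, hrD, hQD⟩ :=
    P.exists_eq_append_first_mem (T := {x | x ∈ D.support}) ⟨v, P.end_mem_support, hvD⟩
  have hQ : Q.IsPath := hP.of_append_left
  have hyQ : y ∉ Q.support := fun h => hyP ((mem_support_append_iff _ _).mpr (Or.inl h))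
  have hyr : y ≠ r := fun h => hyQ (h ▸ Q.end_mem_support)
  obtain ⟨A, B, hAB, -, hsupp⟩ := hD.exists_isCycle_append hyD hrD
  have close : ∀ δ : G.Walk y r, δ.IsPath → (∀ z ∈ δ.support, z ∈ D.support) →
      v ∈ δ.support →
        ∃ (b' : V) (Z : G.Walk b' b'), Z.IsCycle ∧ x ∈ Z.support ∧ v ∈ Z.support :=
    fun δ hδ hδD hvδ => ⟨x, _,
      isCycle_append_append_reverse hxy.isPath_toWalk hδ hQ hyr
        (fun z hz hzδ => by
          rcases (by simpa using hz : z = x ∨ z = y) with rfl | rfl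
          exacts [absurd (hδD z hzδ) hxD, rfl])
        (fun z hz hzδ => hQD z hz (hδD z hzδ))
        (fun z hz hzQ => by
          rcases (by simpa using hz : z = x ∨ z = y) with rfl | rfl
          exacts [rfl, absurd hzQ hyQ]),
      start_mem_support _, by simp [mem_support_append_iff, hvδ]⟩
  have hA : A.IsPath := hAB.isPath_of_append_left (not_nil_of_ne hyr.symm)
  have hB : B.IsPath := hAB.isPath_of_append_right (not_nil_of_ne hyr)
  rcases (hsupp v).mp hvD with hvA | hvB
  · exact close A hA (fun z hz => (hsupp z).mpr (Or.inl hz)) hvA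
  · exact close B.reverse hB.reverse (fun z hz => (hsupp z).mpr (Or.inr (by simpa using hz)))
      (by simpa using hvB)

theorem isFan_takeUntil_append [DecidableEq V] {T : Set V} {w t f g : V} {P Q : G.Walk w t}
    {F : G.Walk f g} (hP : P.IsPath) (hQ : Q.IsPath)
    (hPQ : ∀ x ∈ P.support, x ∈ Q.support → x = w ∨ x = t)
    (hPT : ∀ x ∈ P.support, x ∈ T → x = t) (hQT : ∀ x ∈ Q.support, x ∈ T → x = t)
    (ht : t ∈ T) (hF : F.IsPath) (hfP : f ∈ P.support) (hg : g ∈ T) (hgt : g ≠ t)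
    (hFT : ∀ x ∈ F.support, x ∈ T → x = g)
    (hFPQ : ∀ x ∈ F.support, x ∈ P.support ∨ x ∈ Q.support → x = f) :
    IsFan T ((P.takeUntil f hfP).append F) Q := by
  have hft : f ≠ t := fun h => hgt ((hFT f F.start_mem_support (h ▸ ht)).symm.trans h)
  have hP₁P : ∀ x ∈ (P.takeUntil f hfP).support, x ∈ P.support :=
    fun x hx => P.support_takeUntil_subset_support hfP hx
  have htP₁ : t ∉ (P.takeUntil f hfP).support :=
    endpoint_notMem_support_takeUntil hP hfP hft.symm
  refine ⟨hgt, hg, ht,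
    (hP.takeUntil hfP).append hF fun x hx hxF => hFPQ x hxF (Or.inl (hP₁P x hx)), hQ, fun x hx hxT => ?_, hQT, fun x hx hxQ => ?_⟩
  · rcases (mem_support_append_iff _ _).mp hx with hx | hx
    · exact absurd (hPT x (hP₁P x hx) hxT ▸ hx) htP₁
    · exact hFT x hx hxT
  · rcases (mem_support_append_iff _ _).mp hx with hx | hx
    · exact (hPQ x (hP₁P x hx) hxQ).resolve_right (by rintro rfl; exact htP₁ hx)
    · obtain rfl := hFPQ x hx (Or.inr hxQ)
      exact (hPQ x hfP hxQ).resolve_right hft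

theorem exists_isFan_of_common_end {T : Set V} {w t t' : V} {P Q : G.Walk w t}
    (ht : (G.induce {x | x ≠ t}).Preconnected) (hP : P.IsPath) (hQ : Q.IsPath)
    (hPQ : ∀ x ∈ P.support, x ∈ Q.support → x = w ∨ x = t)
    (hPT : ∀ x ∈ P.support, x ∈ T → x = t) (hQT : ∀ x ∈ Q.support, x ∈ T → x = t)
    (htT : t ∈ T) (hwt : w ≠ t) (ht' : t' ∈ T) (ht't : t' ≠ t) :
    ∃ (p q : V) (P' : G.Walk w p) (Q' : G.Walk w q), IsFan T P' Q' := by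
  classical
  obtain ⟨F₀, hF₀, htF₀⟩ := exists_isPath_notMem_support ht ht't hwt
  obtain ⟨f, R, _, rfl, hf, hR⟩ := F₀.exists_eq_append_first_mem
    (T := {x | x ∈ P.support ∨ x ∈ Q.support})
    ⟨w, F₀.end_mem_support, Or.inl P.start_mem_support⟩
  obtain ⟨g, F, _, hRF, hg, hFT⟩ :=
    R.reverse.exists_eq_append_first_mem (T := T) ⟨t', by simp, ht'⟩
  have hFR : ∀ x ∈ F.support, x ∈ R.support := fun x hx => by
    have : x ∈ R.reverse.support := hRF ▸ (mem_support_append_iff _ _).mpr (Or.inl hx)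
    simpa using this
  have hF : F.IsPath := (hRF ▸ hF₀.of_append_left.reverse).of_append_left
  have hgt : g ≠ t := fun h =>
    htF₀ ((mem_support_append_iff _ _).mpr (Or.inl (h ▸ hFR g F.end_mem_support)))
  have hFPQ : ∀ x ∈ F.support, x ∈ P.support ∨ x ∈ Q.support → x = f :=
    fun x hx h => hR x (hFR x hx) h
  rcases hf with hfP | hfQ
  · exact ⟨_, _, _, _, isFan_takeUntil_append hP hQ hPQ hPT hQT htT hF hfP hg hgt hFT hFPQ⟩
  · exact ⟨_, _, _, _, isFan_takeUntil_append hQ hP (fun x hxQ hxP => hPQ x hxP hxQ) hQT hPT htT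
      hF hfQ hg hgt hFT fun x hx h => hFPQ x hx h.symm⟩

end SimpleGraph

namespace TwoConnected

open SimpleGraph.Walk

variable {V : Type*} [Fintype V] {G : SimpleGraph V}

theorem exists_isCycle_of_adj (hG : TwoConnected G) {x v : V} (hxv : G.Adj x v) :
    ∃ (b : V) (Z : G.Walk b b), Z.IsCycle ∧ x ∈ Z.support ∧ v ∈ Z.support := by
  classical
  obtain ⟨t, -, ht⟩ := Finset.exists_mem_notMem_of_card_lt_card (s := {x, v})
    (t := .univ) (Finset.card_le_two.trans_lt (by rw [Finset.card_univ]; exact hG.1))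
  obtain ⟨htx, htv⟩ : t ≠ x ∧ t ≠ v := by simpa [not_or] using ht
  obtain ⟨P, -, hxP⟩ := exists_isPath_notMem_support (hG.2.2 x).preconnected hxv.ne' htx
  set z := P.snd
  have hvz : G.Adj v z := P.adj_snd (not_nil_of_ne htv.symm)
  have hzx : z ≠ x := fun h => hxP (h ▸ P.getVert_mem_support 1)
  obtain ⟨Q, hQ, hvQ⟩ := exists_isPath_notMem_support (hG.2.2 v).preconnected hvz.ne' hxv.ne
  have hB : (cons hvz.symm hxv.symm.toWalk).IsPath :=
    hxv.symm.isPath_toWalk.cons (by simp [hvz.ne', hzx])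
  refine ⟨z, _, hB.isCycle_append_reverse hQ (fun y hy hyQ => ?_) (by simp), by simp, by simp⟩
  simp only [Adj.toWalk, support_cons, support_nil, List.mem_cons, List.not_mem_nil,
    or_false] at hy
  rcases hy with rfl | rfl | rfl
  exacts [Or.inl rfl, absurd hyQ hvQ, Or.inr rfl]

theorem exists_isCycle_mem_support (hG : TwoConnected G) {u v : V} (huv : u ≠ v) :
    ∃ (b : V) (D : G.Walk b b), D.IsCycle ∧ u ∈ D.support ∧ v ∈ D.support := by
  obtain ⟨W⟩ := hG.2.1 u v
  induction W with
  | nil => exact absurd rfl huv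
  | @cons x y v hxy W ih =>
    by_cases hyv : y = v
    · subst hyv
      exact hG.exists_isCycle_of_adj hxy
    obtain ⟨b, D, hD, hyD, hvD⟩ := ih hyv
    exact exists_isCycle_of_adj_of_isCycle (hG.2.2 y).preconnected hxy hD hyD hvD (Ne.symm hyv)

theorem exists_isFan (hG : TwoConnected G) {T : Set V} {w t t' : V} (hw : w ∉ T) (ht : t ∈ T)
    (ht' : t' ∈ T) (ht't : t' ≠ t) :
    ∃ (p q : V) (P : G.Walk w p) (Q : G.Walk w q), IsFan T P Q := by
  have hwt : w ≠ t := fun h => hw (h ▸ ht)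
  obtain ⟨b, D, hD, hwD, htD⟩ := hG.exists_isCycle_mem_support hwt
  obtain ⟨A, B, hAB, -, -⟩ := hD.exists_isCycle_append hwD htD
  have hA : A.IsPath := hAB.isPath_of_append_left (not_nil_of_ne hwt.symm)
  have hB : B.reverse.IsPath := (hAB.isPath_of_append_right (not_nil_of_ne hwt)).reverse
  obtain ⟨p, P, A', rfl, hp, hPT⟩ := A.exists_eq_append_first_mem ⟨t, A.end_mem_support, ht⟩
  obtain ⟨q, Q, B', hBQ, hq, hQT⟩ :=
    B.reverse.exists_eq_append_first_mem ⟨t, B.reverse.end_mem_support, ht⟩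
  have hQB : ∀ x ∈ Q.support, x ∈ B.support := fun x hx => by
    have : x ∈ B.reverse.support := hBQ ▸ (mem_support_append_iff _ _).mpr (Or.inl hx)
    simpa using this
  have hPQ : ∀ x ∈ P.support, x ∈ Q.support → x = w ∨ x = t := fun x hx hxQ =>
    hAB.eq_or_eq_of_mem_support ((mem_support_append_iff _ _).mpr (Or.inl hx)) (hQB x hxQ)
  have hP : P.IsPath := hA.of_append_left
  have hQ : Q.IsPath := (hBQ ▸ hB).of_append_left
  by_cases hpq : p = q
  · subst hpq
    obtain rfl : p = t :=
      (hPQ p P.end_mem_support Q.end_mem_support).resolve_left fun h => hw (h ▸ hp)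
    exact exists_isFan_of_common_end (hG.2.2 p).preconnected hP hQ hPQ hPT hQT hp hwt ht' ht't
  · refine ⟨p, q, P, Q, hpq, hp, hq, hP, hQ, hPT, hQT, fun x hx hxQ => ?_⟩
    refine (hPQ x hx hxQ).resolve_right ?_
    rintro rfl
    exact hpq ((hPT x hx ht).symm.trans (hQT x hxQ ht))

end TwoConnected

theorem stmt17_general {V : Type*} [Fintype V] (G : SimpleGraph V)
    (hG : TwoConnected G) (S : Set V)
    (h : ¬ ∃ (a : V) (c : G.Walk a a), c.IsCycle ∧ Even c.length ∧ ∃ w ∈ S, w ∈ c.support) :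
    ∀ (a : V) (c : G.Walk a a), c.IsCycle → (∃ w ∈ S, w ∈ c.support) →
      ∀ w ∈ S, w ∈ c.support := by
  intro a c hc ⟨s, hsS, hsc⟩ w hwS
  by_contra hwc
  have hodd : Odd c.length := Nat.not_even_iff_odd.mp fun he => h ⟨a, c, hc, he, s, hsS, hsc⟩
  obtain ⟨t, htc, hts⟩ := hc.exists_mem_support_ne s
  obtain ⟨p, q, P, Q, hfan⟩ := hG.exists_isFan (T := {x | x ∈ c.support}) hwc hsc htc hts
  obtain ⟨Z, hZ, hZe⟩ := hfan.exists_even_isCycle hc hodd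
  exact h ⟨w, Z, hZ, hZe, w, hwS, Z.start_mem_support⟩

/-- If a 2-connected graph with `S ≠ ∅` contains no even `S`-cycle, then every cycle of
`G` containing a vertex of `S` contains every vertex of `S`. -/
theorem stmt17 {V : Type*} [Fintype V] (G : SimpleGraph V)
    (hG : TwoConnected G) (S : Set V) (hS : S.Nonempty)
    (h : ¬ ∃ (a : V) (c : G.Walk a a), c.IsCycle ∧ Even c.length ∧ ∃ w ∈ S, w ∈ c.support) :
    ∀ (a : V) (c : G.Walk a a), c.IsCycle → (∃ w ∈ S, w ∈ c.support) →
      ∀ w ∈ S, w ∈ c.support :=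
  stmt17_general G hG S h
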